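/- For d ∈ {2,3} and every δ ∈ (0,1/2), the following two double integrals are finite: ∫∫_{(ℝ×ℝ^d)²} P(z) P(z') ρ(‖z‖) ρ(‖z'‖) ρ(‖z'−z‖) dz dz' < ∞ and ∫∫_{(ℝ×ℝ^d)²} P(z) P(z'−z) ρ(‖z‖) ρ(‖z'‖) ρ(‖z'−z‖) dz dz' < ∞. In particular, whenever a function κ₃ on (ℝ×ℝ^d)² satisfies |κ₃(z,z')| ≤ ρ(‖z‖) ρ(‖z'‖) ρ(‖z'−z‖), the constants ∫∫ P(z) P(z') κ₃(z,z') dz dz' and ∫∫ P(z) P(z'−z) κ₃(z,z') dz dz' converge absolutely. -/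

import Mathlib

open Real MeasureTheory

/-- Space-time `ℝ × ℝ^d`. -/
abbrev SpaceTime (d : ℕ) := ℝ × EuclideanSpace ℝ (Fin d)

/-- The parabolic norm `‖(t,x)‖ = (|x|⁴ + t²)^{1/4}`. -/
noncomputable def pnorm {d : ℕ} (z : SpaceTime d) : ℝ :=
  (‖z.2‖ ^ 4 + z.1 ^ 2) ^ ((1 : ℝ) / 4)

/-- The heat kernel on `ℝ × ℝ^d`. -/
noncomputable def heatP (d : ℕ) (z : SpaceTime d) : ℝ :=
  if 0 < z.1 then (4 * π * z.1) ^ (-(d : ℝ) / 2) * Real.exp (-‖z.2‖ ^ 2 / (4 * z.1))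
  else 0

/-- `ρ(r) = min (r^{-(1/2-δ)}) (r^{-((d+2)/2+δ)})`. -/
noncomputable def rhoF (d : ℕ) (δ r : ℝ) : ℝ :=
  min (r ^ (-(1 / 2 - δ))) (r ^ (-(((d : ℝ) + 2) / 2 + δ)))

open Set
open scoped ENNReal

/-!
Write `F = P · ρ(‖·‖)` and split `ρ(‖w‖) ≤ K(w) + 1`, where `K` (`rhoNear`) is `ρ(‖·‖)`
restricted to the parabolic unit ball. The integrands are then at most
`F(z) F(z') (K(z' - z) + 1)` and `F(z) F(z' - z) (K(z') + 1)`, and for fixed `z` Hölder's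
inequality with exponents `4/3` and `4`, together with translation invariance, bounds the inner
integral by `‖F‖_{4/3} ‖K‖_4 + ‖F‖_1`.

`K ∈ L⁴` because `ρ(‖(t, x)‖) ≤ |t|^(-c̲/2)` and `2 c̲ < 1`. For `F ∈ Lᵉ`, the Gaussian integral in
`x` gives `∫ P(t, ·)ᵉ = C t^(d(1-e)/2)`, and `ρ(‖(t, x)‖) ≤ min(t^(-c̲/2), t^(-c̄/2))`, so
`∫ Fᵉ ≤ C ∫₀^∞ min(t^(-p), t^(-q)) dt` with `p = d(e-1)/2 + e c̲/2` and `q = d(e-1)/2 + e c̄/2`.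
This is finite when `p < 1 < q`, which for `e = 1` and `e = 4/3` holds as soon as `2 ≤ d ≤ 4`.
-/

theorem lintegral_Ioi_min_rpow_lt_top {p q : ℝ} (hp : p < 1) (hq : 1 < q) :
    ∫⁻ t in Ioi 0, ENNReal.ofReal (min (t ^ (-p)) (t ^ (-q))) < ∞ := by
  have h₀ : IntegrableOn (fun t : ℝ ↦ t ^ (-p)) (Ioo 0 1) :=
    (intervalIntegral.integrableOn_Ioo_rpow_iff one_pos).2 (by linarith)
  have h₁ : IntegrableOn (fun t : ℝ ↦ t ^ (-q)) (Ioi 1) :=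
    (integrableOn_Ioi_rpow_iff one_pos).2 (by linarith)
  rw [← Ioo_union_Ici_eq_Ioi one_pos]
  refine (lintegral_union_le _ _ _).trans_lt (ENNReal.add_lt_top.2 ⟨?_, ?_⟩)
  · exact (setLIntegral_mono' measurableSet_Ioo fun t _ ↦
      ENNReal.ofReal_le_ofReal (min_le_left _ _)).trans_lt h₀.lintegral_lt_top
  · rw [setLIntegral_congr Ioi_ae_eq_Ici.symm]
    exact (setLIntegral_mono' measurableSet_Ioi fun t _ ↦
      ENNReal.ofReal_le_ofReal (min_le_right _ _)).trans_lt h₁.lintegral_lt_top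

theorem intervalIntegrable_abs_rpow {c : ℝ} (hc : -1 < c) (a b : ℝ) :
    IntervalIntegrable (fun t ↦ |t| ^ c) volume a b := by
  have h₀ : ∀ x, 0 ≤ x → IntervalIntegrable (fun t ↦ |t| ^ c) volume 0 x := fun x hx ↦
    (intervalIntegral.intervalIntegrable_rpow' hc).congr fun t ht ↦ by
      rw [uIoc_of_le hx] at ht
      simp [abs_of_pos ht.1]
  have h : ∀ x, IntervalIntegrable (fun t ↦ |t| ^ c) volume 0 x := by
    intro x
    rcases le_total 0 x with hx | hx
    · exact h₀ x hx
    · simpa using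
        (IntervalIntegrable.iff_comp_neg (f := fun t ↦ |t| ^ c)).1 (h₀ (-x) (by linarith))
  exact (h a).symm.trans (h b)

theorem lintegral_mul_comp_sub_le {G : Type*} [MeasurableSpace G] [AddGroup G] [MeasurableAdd G]
    {μ : Measure G} [μ.IsAddRightInvariant] {p q : ℝ} (hpq : p.HolderConjugate q)
    {a b : G → ℝ≥0∞} (ha : AEMeasurable a μ) (hb : Measurable b) (z : G) :
    ∫⁻ x, a x * b (x - z) ∂μ ≤
      (∫⁻ x, a x ^ p ∂μ) ^ (1 / p) * (∫⁻ x, b x ^ q ∂μ) ^ (1 / q) := by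
  have hbz : Measurable fun x ↦ b (x - z) := by
    simp only [sub_eq_add_neg]
    exact hb.comp (measurable_add_const (-z))
  have := ENNReal.lintegral_mul_le_Lp_mul_Lq μ hpq ha hbz.aemeasurable
  rwa [lintegral_sub_right_eq_self (fun x ↦ b x ^ q) z] at this

theorem lintegral_prod_mul_le_of_lintegral_le {α β : Type*} [MeasurableSpace α]
    [MeasurableSpace β] {μ : Measure α} {ν : Measure β} [SFinite ν] {f : α → ℝ≥0∞}
    {g : α × β → ℝ≥0∞} (hf : Measurable f) (hg : Measurable g) {C : ℝ≥0∞}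
    (hC : ∀ x, ∫⁻ y, g (x, y) ∂ν ≤ C) :
    ∫⁻ q, f q.1 * g q ∂μ.prod ν ≤ (∫⁻ x, f x ∂μ) * C := by
  rw [lintegral_prod (fun q ↦ f q.1 * g q) ((hf.comp measurable_fst).mul hg).aemeasurable,
    ← lintegral_mul_const _ hf]
  refine lintegral_mono fun x ↦ ?_
  exact (lintegral_const_mul (f x) (hg.comp measurable_prodMk_left)).trans_le
    (by gcongr; exact hC x)

section Convolution

variable {G : Type*} [MeasurableSpace G] [AddGroup G] [MeasurableAdd₂ G] [MeasurableSub₂ G]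
  {μ : Measure G} [SFinite μ] [μ.IsAddRightInvariant] {p q : ℝ} {f k : G → ℝ≥0∞}

theorem lintegral_prod_mul_mul_comp_sub_add_one_lt_top (hpq : p.HolderConjugate q)
    (hf : Measurable f) (hk : Measurable k) (hf₁ : ∫⁻ x, f x ∂μ < ∞)
    (hfp : ∫⁻ x, f x ^ p ∂μ < ∞) (hkq : ∫⁻ x, k x ^ q ∂μ < ∞) :
    ∫⁻ z, f z.1 * (f z.2 * (k (z.2 - z.1) + 1)) ∂μ.prod μ < ∞ := by
  have hslice (z : G) : ∫⁻ x, f x * (k (x - z) + 1) ∂μ ≤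
      (∫⁻ x, f x ^ p ∂μ) ^ (1 / p) * (∫⁻ x, k x ^ q ∂μ) ^ (1 / q) +
        ∫⁻ x, f x ∂μ := by
    simp only [mul_add, mul_one]
    rw [lintegral_add_right _ hf]
    gcongr
    exact lintegral_mul_comp_sub_le hpq hf.aemeasurable hk z
  have : 0 < p := hpq.pos
  have : 0 < q := hpq.symm.pos
  exact (lintegral_prod_mul_le_of_lintegral_le hf (by fun_prop) hslice).trans_lt (by finiteness)

theorem lintegral_prod_mul_comp_sub_mul_add_one_lt_top (hpq : p.HolderConjugate q)
    (hf : Measurable f) (hk : Measurable k) (hf₁ : ∫⁻ x, f x ∂μ < ∞)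
    (hfp : ∫⁻ x, f x ^ p ∂μ < ∞) (hkq : ∫⁻ x, k x ^ q ∂μ < ∞) :
    ∫⁻ z, f z.1 * (f (z.2 - z.1) * (k z.2 + 1)) ∂μ.prod μ < ∞ := by
  have hslice (z : G) : ∫⁻ x, f (x - z) * (k x + 1) ∂μ ≤
      (∫⁻ x, k x ^ q ∂μ) ^ (1 / q) * (∫⁻ x, f x ^ p ∂μ) ^ (1 / p) +
        ∫⁻ x, f x ∂μ := by
    simp only [mul_add, mul_one]
    rw [lintegral_add_right _ (by fun_prop), lintegral_sub_right_eq_self f z]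
    gcongr
    simp only [mul_comm (f _)]
    exact lintegral_mul_comp_sub_le hpq.symm hk.aemeasurable hf z
  have : 0 < p := hpq.pos
  have : 0 < q := hpq.symm.pos
  exact (lintegral_prod_mul_le_of_lintegral_le hf (by fun_prop) hslice).trans_lt (by finiteness)

end Convolution

theorem ae_prod_ne_zero_and_ne {G : Type*} [MeasurableSpace G] [AddGroup G] [MeasurableAdd₂ G]
    [MeasurableNeg G] (μ : Measure G) [SFinite μ] [μ.IsAddRightInvariant]
    [NullSingletonClass μ] :
    ∀ᵐ z ∂μ.prod μ, z.1 ≠ 0 ∧ z.2 ≠ 0 ∧ z.1 ≠ z.2 := by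
  have h₁ := (Measure.quasiMeasurePreserving_fst (μ := μ) (ν := μ)).ae (μ.ae_ne 0)
  have h₂ := (Measure.quasiMeasurePreserving_snd (μ := μ) (ν := μ)).ae (μ.ae_ne 0)
  have h₃ := (measurePreserving_prod_sub μ μ).quasiMeasurePreserving.ae h₂
  filter_upwards [h₁, h₂, h₃] with z h₁ h₂ h₃
  exact ⟨h₁, h₂, fun h ↦ h₃ (by simp [h])⟩

theorem MeasureTheory.Integrable.mul_of_abs_le {α : Type*} [MeasurableSpace α]
    {μ : Measure α} {g k b : α → ℝ} (hgb : Integrable (fun x ↦ g x * b x) μ)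
    (hg : 0 ≤ g) (hgk : AEStronglyMeasurable (fun x ↦ g x * k x) μ)
    (hkb : ∀ᵐ x ∂μ, |k x| ≤ b x) :
    Integrable (fun x ↦ g x * k x) μ := by
  refine hgb.mono' hgk (hkb.mono fun x hx ↦ ?_)
  rw [norm_mul, norm_of_nonneg (hg x), norm_eq_abs]
  exact mul_le_mul_of_nonneg_left hx (hg x)

theorem lintegral_ofReal_exp_neg_mul_sq_norm {V : Type*} [NormedAddCommGroup V]
    [InnerProductSpace ℝ V] [FiniteDimensional ℝ V] [MeasurableSpace V] [BorelSpace V]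
    {b : ℝ} (hb : 0 < b) :
    ∫⁻ v : V, ENNReal.ofReal (rexp (-b * ‖v‖ ^ 2)) =
      ENNReal.ofReal ((π / b) ^ ((Module.finrank ℝ V : ℝ) / 2)) := by
  have h := GaussianFourier.integral_rexp_neg_mul_sq_norm (V := V) hb
  have hint : Integrable fun v : V ↦ rexp (-b * ‖v‖ ^ 2) :=
    Integrable.of_integral_ne_zero (h ▸ (by positivity))
  rw [← ofReal_integral_eq_lintegral_ofReal hint (ae_of_all _ fun v ↦ (exp_pos _).le), h]

instance SpaceTime.isAddRightInvariant_volume (d : ℕ) :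
    (volume : Measure (SpaceTime d)).IsAddRightInvariant :=
  inferInstanceAs (volume.prod volume).IsAddRightInvariant

instance SpaceTime.nullSingletonClass_volume (d : ℕ) :
    NullSingletonClass (volume : Measure (SpaceTime d)) :=
  inferInstanceAs (NullSingletonClass (volume.prod volume))

section SpaceTime

variable {d : ℕ} {δ : ℝ}

theorem pnorm_nonneg (z : SpaceTime d) : 0 ≤ pnorm z := by unfold pnorm; positivity

theorem norm_snd_le_pnorm (z : SpaceTime d) : ‖z.2‖ ≤ pnorm z := by
  calc ‖z.2‖ = (‖z.2‖ ^ 4) ^ (1 / 4 : ℝ) := by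
        rw [← rpow_natCast, ← rpow_mul (norm_nonneg _)]; norm_num
    _ ≤ pnorm z := by unfold pnorm; gcongr; nlinarith [sq_nonneg z.1]

theorem abs_fst_rpow_half_le_pnorm (z : SpaceTime d) : |z.1| ^ (1 / 2 : ℝ) ≤ pnorm z := by
  calc |z.1| ^ (1 / 2 : ℝ) = (z.1 ^ 2) ^ (1 / 4 : ℝ) := by
        rw [← sq_abs, ← rpow_natCast, ← rpow_mul (abs_nonneg _)]; norm_num
    _ ≤ pnorm z := by unfold pnorm; gcongr; nlinarith [pow_nonneg (norm_nonneg z.2) 4]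

theorem pnorm_rpow_neg_le {z : SpaceTime d} (hz : z.1 ≠ 0) {c : ℝ} (hc : 0 ≤ c) :
    pnorm z ^ (-c) ≤ |z.1| ^ (-c / 2) := by
  have h := abs_fst_rpow_half_le_pnorm z
  calc pnorm z ^ (-c) ≤ (|z.1| ^ (1 / 2 : ℝ)) ^ (-c) :=
        rpow_le_rpow_of_nonpos (by positivity) h (by linarith)
    _ = |z.1| ^ (-c / 2) := by rw [← rpow_mul (abs_nonneg _)]; ring_nf

@[fun_prop]
theorem measurable_pnorm : Measurable (pnorm (d := d)) := by unfold pnorm; fun_prop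

@[fun_prop]
theorem measurable_heatP : Measurable (heatP d) := by
  unfold heatP
  exact Measurable.ite (measurableSet_lt measurable_const measurable_fst) (by fun_prop)
    measurable_const

@[fun_prop]
theorem measurable_rhoF : Measurable (rhoF d δ) := by unfold rhoF; fun_prop

theorem heatP_nonneg (z : SpaceTime d) : 0 ≤ heatP d z := by
  unfold heatP; split_ifs <;> positivity

theorem rhoF_nonneg {r : ℝ} (hr : 0 ≤ r) : 0 ≤ rhoF d δ r := by unfold rhoF; positivity

theorem rhoF_le_one (hδ : δ ≤ 1 / 2) {r : ℝ} (hr : 1 ≤ r) : rhoF d δ r ≤ 1 :=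
  (min_le_left _ _).trans (rpow_le_one_of_one_le_of_nonpos hr (by linarith))

theorem heatP_rpow {t : ℝ} (ht : 0 < t) (x : EuclideanSpace ℝ (Fin d)) (e : ℝ) :
    heatP d (t, x) ^ e =
      (4 * π * t) ^ (-(d : ℝ) / 2 * e) * rexp (-(e / (4 * t)) * ‖x‖ ^ 2) := by
  rw [heatP, if_pos ht, mul_rpow (by positivity) (exp_pos _).le, ← rpow_mul (by positivity),
    ← exp_mul]
  congr 2
  ring

theorem lintegral_heatP_rpow {t e : ℝ} (ht : 0 < t) (he : 0 < e) :
    ∫⁻ x, ENNReal.ofReal (heatP d (t, x) ^ e) =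
      ENNReal.ofReal (e ^ (-(d : ℝ) / 2) * (4 * π * t) ^ ((d : ℝ) / 2 * (1 - e))) := by
  have h4πt : 0 < 4 * π * t := by positivity
  simp_rw [heatP_rpow ht, ENNReal.ofReal_mul (rpow_nonneg h4πt.le _)]
  rw [lintegral_const_mul _ (by fun_prop), lintegral_ofReal_exp_neg_mul_sq_norm (by positivity),
    ← ENNReal.ofReal_mul (rpow_nonneg h4πt.le _), finrank_euclideanSpace_fin]
  congr 1
  rw [show π / (e / (4 * t)) = 4 * π * t / e by field_simp, div_rpow h4πt.le he.le,
    neg_div, rpow_neg he.le, mul_div, ← rpow_add h4πt]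
  ring_nf

theorem heatP_of_nonpos {z : SpaceTime d} (hz : z.1 ≤ 0) : heatP d z = 0 := if_neg hz.not_gt

theorem rhoF_pnorm_rpow_le (hδ : δ ∈ Icc 0 (1 / 2)) {z : SpaceTime d} (hz : 0 < z.1) {e : ℝ}
    (he : 0 ≤ e) :
    rhoF d δ (pnorm z) ^ e ≤
      min (z.1 ^ (-(e * (1 / 2 - δ) / 2))) (z.1 ^ (-(e * (((d : ℝ) + 2) / 2 + δ) / 2))) := by
  have hpow {c : ℝ} (hc : 0 ≤ c) (hρ : rhoF d δ (pnorm z) ≤ pnorm z ^ (-c)) :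
      rhoF d δ (pnorm z) ^ e ≤ z.1 ^ (-(e * c / 2)) := by
    calc rhoF d δ (pnorm z) ^ e ≤ (z.1 ^ (-c / 2)) ^ e := by
          gcongr
          · exact rhoF_nonneg (pnorm_nonneg z)
          · simpa [abs_of_pos hz] using hρ.trans (pnorm_rpow_neg_le hz.ne' hc)
      _ = z.1 ^ (-(e * c / 2)) := by rw [← rpow_mul hz.le]; ring_nf
  exact le_min (hpow (by linarith [hδ.2]) (min_le_left _ _))
    (hpow (by linarith [hδ.1, (d.cast_nonneg : (0 : ℝ) ≤ d)]) (min_le_right _ _))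

noncomputable def heatRho (d : ℕ) (δ : ℝ) (z : SpaceTime d) : ℝ≥0∞ :=
  ENNReal.ofReal (heatP d z * rhoF d δ (pnorm z))

@[fun_prop]
theorem measurable_heatRho : Measurable (heatRho d δ) := by unfold heatRho; fun_prop

theorem lintegral_heatRho_rpow_slice_le (hδ : δ ∈ Icc 0 (1 / 2)) {t e : ℝ} (ht : 0 < t)
    (he : 0 < e) :
    ∫⁻ x, heatRho d δ (t, x) ^ e ≤
      ENNReal.ofReal (e ^ (-(d : ℝ) / 2) * (4 * π) ^ ((d : ℝ) / 2 * (1 - e))) *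
        ENNReal.ofReal (min (t ^ (-((d : ℝ) / 2 * (e - 1) + e * (1 / 2 - δ) / 2)))
          (t ^ (-((d : ℝ) / 2 * (e - 1) + e * (((d : ℝ) + 2) / 2 + δ) / 2)))) := by
  set m := min (t ^ (-(e * (1 / 2 - δ) / 2))) (t ^ (-(e * (((d : ℝ) + 2) / 2 + δ) / 2)))
  have hm : 0 ≤ m := by positivity
  have hpt (x : EuclideanSpace ℝ (Fin d)) :
      heatRho d δ (t, x) ^ e ≤ ENNReal.ofReal (heatP d (t, x) ^ e) * ENNReal.ofReal m := by
    have hP := heatP_nonneg (t, x)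
    have hρ := rhoF_nonneg (d := d) (δ := δ) (pnorm_nonneg (t, x))
    rw [heatRho, ENNReal.ofReal_rpow_of_nonneg (by positivity) he.le, mul_rpow hP hρ,
      ← ENNReal.ofReal_mul (by positivity)]
    gcongr
    exact rhoF_pnorm_rpow_le hδ ht he.le
  calc ∫⁻ x, heatRho d δ (t, x) ^ e
      ≤ ∫⁻ x, ENNReal.ofReal (heatP d (t, x) ^ e) * ENNReal.ofReal m := lintegral_mono hpt
    _ = ENNReal.ofReal (e ^ (-(d : ℝ) / 2) * (4 * π * t) ^ ((d : ℝ) / 2 * (1 - e))) *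
          ENNReal.ofReal m := by
      rw [lintegral_mul_const _ (by fun_prop), lintegral_heatP_rpow ht he]
    _ = _ := by
      rw [← ENNReal.ofReal_mul (by positivity), ← ENNReal.ofReal_mul (by positivity)]
      congr 1
      rw [mul_rpow (by positivity) ht.le, mul_assoc, mul_assoc,
        mul_min_of_nonneg _ _ (by positivity), ← rpow_add ht, ← rpow_add ht]
      ring_nf

theorem lintegral_heatRho_rpow_lt_top (hδ : δ ∈ Icc 0 (1 / 2)) {e : ℝ} (he : 0 < e)
    (hp : (d : ℝ) / 2 * (e - 1) + e * (1 / 2 - δ) / 2 < 1)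
    (hq : 1 < (d : ℝ) / 2 * (e - 1) + e * (((d : ℝ) + 2) / 2 + δ) / 2) :
    ∫⁻ z, heatRho d δ z ^ e < ∞ := by
  set C := ENNReal.ofReal (e ^ (-(d : ℝ) / 2) * (4 * π) ^ ((d : ℝ) / 2 * (1 - e)))
  have hslice (t : ℝ) : ∫⁻ x, heatRho d δ (t, x) ^ e ≤ (Ioi 0).indicator (fun t ↦ C *
      ENNReal.ofReal (min (t ^ (-((d : ℝ) / 2 * (e - 1) + e * (1 / 2 - δ) / 2)))
        (t ^ (-((d : ℝ) / 2 * (e - 1) + e * (((d : ℝ) + 2) / 2 + δ) / 2))))) t := by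
    rcases lt_or_ge 0 t with ht | ht
    · rw [indicator_of_mem (show t ∈ Ioi 0 from ht)]
      exact lintegral_heatRho_rpow_slice_le hδ ht he
    · simp [heatRho, heatP_of_nonpos (z := (t, _)) ht, he]
  calc ∫⁻ z, heatRho d δ z ^ e = ∫⁻ t, ∫⁻ x, heatRho d δ (t, x) ^ e := by
        rw [Measure.volume_eq_prod, lintegral_prod _ (by fun_prop)]
    _ ≤ _ := lintegral_mono hslice
    _ < ∞ := by
      rw [lintegral_indicator measurableSet_Ioi, lintegral_const_mul' _ _ ENNReal.ofReal_ne_top]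
      exact ENNReal.mul_lt_top ENNReal.ofReal_lt_top (lintegral_Ioi_min_rpow_lt_top hp hq)

noncomputable def rhoNear (d : ℕ) (δ : ℝ) : SpaceTime d → ℝ≥0∞ :=
  {z | pnorm z ≤ 1}.indicator fun z ↦ ENNReal.ofReal (rhoF d δ (pnorm z))

@[fun_prop]
theorem measurable_rhoNear : Measurable (rhoNear d δ) :=
  Measurable.indicator (by fun_prop) (measurableSet_le measurable_pnorm measurable_const)

theorem ofReal_rhoF_le_rhoNear_add_one (hδ : δ ≤ 1 / 2) (z : SpaceTime d) :
    ENNReal.ofReal (rhoF d δ (pnorm z)) ≤ rhoNear d δ z + 1 := by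
  by_cases hz : pnorm z ≤ 1
  · simp [rhoNear, hz]
  · rw [rhoNear, indicator_of_notMem (show z ∉ {z | pnorm z ≤ 1} from hz), zero_add,
      ← ENNReal.ofReal_one]
    exact ENNReal.ofReal_le_ofReal (rhoF_le_one hδ (not_le.1 hz).le)

theorem rhoNear_rpow_four_le (hδ : δ ≤ 1 / 2) {z : SpaceTime d} (hz : z.1 ≠ 0) :
    rhoNear d δ z ^ (4 : ℝ) ≤
      (Icc (-1) 1).indicator (fun t ↦ ENNReal.ofReal (|t| ^ (2 * δ - 1))) z.1 *
        (Metric.closedBall 0 1).indicator 1 z.2 := by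
  by_cases hz1 : pnorm z ≤ 1
  · have ht : |z.1| ≤ 1 := by
      have := (abs_fst_rpow_half_le_pnorm z).trans hz1
      rw [rpow_le_one_iff_of_pos (abs_pos.2 hz)] at this
      exact (this.resolve_left (by norm_num)).1
    have hx : z.2 ∈ Metric.closedBall 0 1 :=
      mem_closedBall_zero_iff.2 ((norm_snd_le_pnorm z).trans hz1)
    have hρ : rhoF d δ (pnorm z) ≤ |z.1| ^ (-(1 / 2 - δ) / 2) :=
      (min_le_left _ _).trans (pnorm_rpow_neg_le hz (by linarith))
    rw [rhoNear, indicator_of_mem (show z ∈ {z | pnorm z ≤ 1} from hz1),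
      indicator_of_mem (show z.1 ∈ Icc (-1 : ℝ) 1 from abs_le.1 ht), indicator_of_mem hx,
      Pi.one_apply, mul_one,
      ENNReal.ofReal_rpow_of_nonneg (rhoF_nonneg (pnorm_nonneg z)) (by norm_num)]
    gcongr
    calc rhoF d δ (pnorm z) ^ (4 : ℝ) ≤ (|z.1| ^ (-(1 / 2 - δ) / 2)) ^ (4 : ℝ) := by
          gcongr; exact rhoF_nonneg (pnorm_nonneg z)
      _ = |z.1| ^ (2 * δ - 1) := by rw [← rpow_mul (abs_nonneg _)]; ring_nf
  · simp [rhoNear, hz1]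

theorem lintegral_rhoNear_rpow_four_lt_top (hδ : δ ∈ Ioc 0 (1 / 2)) :
    ∫⁻ z, rhoNear d δ z ^ (4 : ℝ) < ∞ := by
  have hae : ∀ᵐ z : SpaceTime d, z.1 ≠ 0 :=
    Measure.quasiMeasurePreserving_fst.ae (Measure.ae_ne volume 0)
  have hint : IntegrableOn (fun t : ℝ ↦ |t| ^ (2 * δ - 1)) (Icc (-1) 1) :=
    (intervalIntegrable_iff_integrableOn_Icc_of_le (by norm_num)).1
      (intervalIntegrable_abs_rpow (by linarith [hδ.1]) _ _)
  calc ∫⁻ z, rhoNear d δ z ^ (4 : ℝ)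
      ≤ ∫⁻ z : SpaceTime d,
          (Icc (-1) 1).indicator (fun t ↦ ENNReal.ofReal (|t| ^ (2 * δ - 1))) z.1 *
            (Metric.closedBall 0 1).indicator 1 z.2 :=
        lintegral_mono_ae (hae.mono fun z hz ↦ rhoNear_rpow_four_le hδ.2 hz)
    _ = (∫⁻ t in Icc (-1) 1, ENNReal.ofReal (|t| ^ (2 * δ - 1))) *
          volume (Metric.closedBall (0 : EuclideanSpace ℝ (Fin d)) 1) := by
      rw [Measure.volume_eq_prod, lintegral_prod_mul
          (by fun_prop (disch := exact measurableSet_Icc))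
          (by fun_prop (disch := exact measurableSet_closedBall)),
        lintegral_indicator measurableSet_Icc, lintegral_indicator_one measurableSet_closedBall]
    _ < ∞ := ENNReal.mul_lt_top hint.lintegral_lt_top measure_closedBall_lt_top

theorem lintegral_heatRho_lt_top (hd : 2 ≤ d) (hδ : δ ∈ Ioo 0 (1 / 2)) :
    ∫⁻ z, heatRho d δ z < ∞ := by
  have hd' : (2 : ℝ) ≤ d := by exact_mod_cast hd
  simpa using lintegral_heatRho_rpow_lt_top (Ioo_subset_Icc_self hδ) one_pos
    (by linarith [hδ.1]) (by linarith [hδ.1])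

theorem lintegral_heatRho_rpow_four_thirds_lt_top (hd : 1 ≤ d) (hd' : d ≤ 4)
    (hδ : δ ∈ Ioo 0 (1 / 2)) :
    ∫⁻ z, heatRho d δ z ^ (4 / 3 : ℝ) < ∞ := by
  have h₁ : (1 : ℝ) ≤ d := by exact_mod_cast hd
  have h₄ : (d : ℝ) ≤ 4 := by exact_mod_cast hd'
  exact lintegral_heatRho_rpow_lt_top (Ioo_subset_Icc_self hδ) (by norm_num)
    (by linarith [hδ.1]) (by linarith [hδ.1])

theorem heatRho_mul_heatRho_mul_ofReal (z w : SpaceTime d) (c : ℝ) :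
    heatRho d δ z * (heatRho d δ w * ENNReal.ofReal c) =
      ENNReal.ofReal
        (heatP d z * rhoF d δ (pnorm z) * (heatP d w * rhoF d δ (pnorm w) * c)) := by
  have hPρ (z : SpaceTime d) : 0 ≤ heatP d z * rhoF d δ (pnorm z) :=
    mul_nonneg (heatP_nonneg z) (rhoF_nonneg (pnorm_nonneg z))
  rw [heatRho, heatRho, ← ENNReal.ofReal_mul (hPρ w), ← ENNReal.ofReal_mul (hPρ z)]

theorem integrable_heatP_mul_heatP_mul_rhoF (hd : 2 ≤ d) (hd' : d ≤ 4)
    (hδ : δ ∈ Ioo 0 (1 / 2)) :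
    Integrable fun q : SpaceTime d × SpaceTime d ↦ heatP d q.1 * heatP d q.2 *
      (rhoF d δ (pnorm q.1) * rhoF d δ (pnorm q.2) * rhoF d δ (pnorm (q.2 - q.1))) := by
  have hρ (z : SpaceTime d) := rhoF_nonneg (d := d) (δ := δ) (pnorm_nonneg z)
  have hP := heatP_nonneg (d := d)
  refine (lintegral_ofReal_ne_top_iff_integrable (by fun_prop : Measurable _).aestronglyMeasurable
    (ae_of_all _ fun q ↦ ?_)).1 (ne_of_lt ?_)
  · exact mul_nonneg (mul_nonneg (hP _) (hP _)) (mul_nonneg (mul_nonneg (hρ _) (hρ _)) (hρ _))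
  rw [Measure.volume_eq_prod]
  refine (lintegral_mono fun q ↦ ?_).trans_lt
    (lintegral_prod_mul_mul_comp_sub_add_one_lt_top (Real.holderConjugate_iff.2 (by norm_num))
      measurable_heatRho measurable_rhoNear (lintegral_heatRho_lt_top hd hδ)
      (lintegral_heatRho_rpow_four_thirds_lt_top (by omega) hd' hδ)
      (lintegral_rhoNear_rpow_four_lt_top (Ioo_subset_Ioc_self hδ)))
  calc _ = heatRho d δ q.1 *
        (heatRho d δ q.2 * ENNReal.ofReal (rhoF d δ (pnorm (q.2 - q.1)))) := by
        rw [heatRho_mul_heatRho_mul_ofReal]; congr 1; ring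
    _ ≤ _ := by gcongr; exact ofReal_rhoF_le_rhoNear_add_one hδ.2.le _

theorem integrable_heatP_mul_heatP_sub_mul_rhoF (hd : 2 ≤ d) (hd' : d ≤ 4)
    (hδ : δ ∈ Ioo 0 (1 / 2)) :
    Integrable fun q : SpaceTime d × SpaceTime d ↦ heatP d q.1 * heatP d (q.2 - q.1) *
      (rhoF d δ (pnorm q.1) * rhoF d δ (pnorm q.2) * rhoF d δ (pnorm (q.2 - q.1))) := by
  have hρ (z : SpaceTime d) := rhoF_nonneg (d := d) (δ := δ) (pnorm_nonneg z)
  have hP := heatP_nonneg (d := d)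
  refine (lintegral_ofReal_ne_top_iff_integrable (by fun_prop : Measurable _).aestronglyMeasurable
    (ae_of_all _ fun q ↦ ?_)).1 (ne_of_lt ?_)
  · exact mul_nonneg (mul_nonneg (hP _) (hP _)) (mul_nonneg (mul_nonneg (hρ _) (hρ _)) (hρ _))
  rw [Measure.volume_eq_prod]
  refine (lintegral_mono fun q ↦ ?_).trans_lt
    (lintegral_prod_mul_comp_sub_mul_add_one_lt_top (Real.holderConjugate_iff.2 (by norm_num))
      measurable_heatRho measurable_rhoNear (lintegral_heatRho_lt_top hd hδ)
      (lintegral_heatRho_rpow_four_thirds_lt_top (by omega) hd' hδ)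
      (lintegral_rhoNear_rpow_four_lt_top (Ioo_subset_Ioc_self hδ)))
  calc _ = heatRho d δ q.1 *
        (heatRho d δ (q.2 - q.1) * ENNReal.ofReal (rhoF d δ (pnorm q.2))) := by
        rw [heatRho_mul_heatRho_mul_ofReal]; congr 1; ring
    _ ≤ _ := by gcongr; exact ofReal_rhoF_le_rhoNear_add_one hδ.2.le _

end SpaceTime

theorem stmt7 (d : ℕ) (hd : d = 2 ∨ d = 3) (δ : ℝ) (hδ : δ ∈ Set.Ioo (0 : ℝ) (1 / 2)) :
    Integrable (fun q : SpaceTime d × SpaceTime d =>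
      heatP d q.1 * heatP d q.2 *
        (rhoF d δ (pnorm q.1) * rhoF d δ (pnorm q.2) * rhoF d δ (pnorm (q.2 - q.1)))) ∧
    Integrable (fun q : SpaceTime d × SpaceTime d =>
      heatP d q.1 * heatP d (q.2 - q.1) *
        (rhoF d δ (pnorm q.1) * rhoF d δ (pnorm q.2) * rhoF d δ (pnorm (q.2 - q.1)))) ∧
    ∀ κ₃ : SpaceTime d → SpaceTime d → ℝ,
      Measurable (fun q : SpaceTime d × SpaceTime d => κ₃ q.1 q.2) →
      (∀ z z' : SpaceTime d, z ≠ 0 → z' ≠ 0 → z ≠ z' →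
        |κ₃ z z'| ≤ rhoF d δ (pnorm z) * rhoF d δ (pnorm z') * rhoF d δ (pnorm (z' - z))) →
      Integrable (fun q : SpaceTime d × SpaceTime d =>
        heatP d q.1 * heatP d q.2 * κ₃ q.1 q.2) ∧
      Integrable (fun q : SpaceTime d × SpaceTime d =>
        heatP d q.1 * heatP d (q.2 - q.1) * κ₃ q.1 q.2) := by
  obtain ⟨hd₂, hd₄⟩ : 2 ≤ d ∧ d ≤ 4 := by omega
  have h₁ := integrable_heatP_mul_heatP_mul_rhoF hd₂ hd₄ hδ
  have h₂ := integrable_heatP_mul_heatP_sub_mul_rhoF hd₂ hd₄ hδ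
  refine ⟨h₁, h₂, fun κ₃ hκ hκρ ↦ ?_⟩
  have hbound : ∀ᵐ q : SpaceTime d × SpaceTime d, |κ₃ q.1 q.2| ≤
      rhoF d δ (pnorm q.1) * rhoF d δ (pnorm q.2) * rhoF d δ (pnorm (q.2 - q.1)) := by
    rw [Measure.volume_eq_prod]
    filter_upwards [ae_prod_ne_zero_and_ne volume] with q hq
    exact hκρ q.1 q.2 hq.1 hq.2.1 hq.2.2
  exact ⟨h₁.mul_of_abs_le (fun q ↦ mul_nonneg (heatP_nonneg _) (heatP_nonneg _))
      (by fun_prop : Measurable _).aestronglyMeasurable hbound,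
    h₂.mul_of_abs_le (fun q ↦ mul_nonneg (heatP_nonneg _) (heatP_nonneg _))
      (by fun_prop : Measurable _).aestronglyMeasurable hbound⟩
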